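/- arXiv:1609.02247 — 3 statements merged into one kernel-verified Lean document; each statement's English description precedes it below -/
import Mathlib

section
/- For any complex polynomial P of degree N, the supremum of |P'(z)| over the closed unit disk is at most N times the supremum of |P(z)| over the closed unit disk. -/
/-!
Let `M` bound `|P|` on the closed unit disk. The reflected polynomial `w ^ N * P (1 / w)` obeys
the same bound on the unit circle, hence on the disk, which gives `|P z| ≤ M |z| ^ N` for
`|z| ≥ 1` and `|coeff P N| ≤ M`. If `|P' z| > N M |z| ^ (N - 1)` at some `|z| ≥ 1`, pick `a` with
`|a| > M` such that `Q = P - a X ^ N` has a critical point at `z`. The growth bound puts every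
root of `Q` in the open disk, and `Q` has degree `N` because `a ≠ coeff P N`; by Gauss–Lucas the
critical point `z` is then in the open disk too, a contradiction. On the unit circle this reads
`|P'| ≤ N M`, and the maximum modulus principle extends it to the disk.
-/

open Metric Polynomial

namespace Polynomial

theorem norm_eval_le_of_forall_mem_sphere (Q : ℂ[X]) {M : ℝ}
    (h : ∀ w ∈ sphere (0 : ℂ) 1, ‖Q.eval w‖ ≤ M) {z : ℂ} (hz : z ∈ closedBall (0 : ℂ) 1) :
    ‖Q.eval z‖ ≤ M := by
  refine Complex.norm_le_of_forall_mem_frontier_norm_le (U := ball 0 1) isBounded_ball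
    Q.differentiable.diffContOnCl (fun w hw => h w ?_) ?_
  · rwa [frontier_ball (0 : ℂ) one_ne_zero] at hw
  · rwa [closure_ball (0 : ℂ) one_ne_zero]

theorem mem_of_isRoot_derivative {Q : ℂ[X]} {s : Set ℂ} (hs : Convex ℝ s) (hQ : 0 < Q.degree)
    (hroots : ∀ w, Q.IsRoot w → w ∈ s) {z : ℂ} (hz : Q.derivative.IsRoot z) : z ∈ s := by
  have hQ' : Q.derivative ≠ 0 := fun h =>
    (natDegree_pos_iff_degree_pos.mpr hQ).ne' (derivative_eq_zero.mp h)
  refine convexHull_min (fun w hw => hroots w ?_) hs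
    (rootSet_derivative_subset_convexHull_rootSet hQ ?_)
  · exact (mem_rootSet.mp hw).2
  · exact mem_rootSet.mpr ⟨hQ', hz⟩

theorem eval_eq_eval_reflect_inv_mul_pow {K : Type*} [Field K] {N : ℕ} {P : K[X]}
    (hP : P.natDegree ≤ N) {z : K} (hz : z ≠ 0) : P.eval z = (P.reflect N).eval z⁻¹ * z ^ N := by
  let _ := invertibleOfNonzero hz
  rw [eval, eval, ← invOf_eq_inv, eval₂_reflect_mul_pow _ _ _ _ hP]

variable {N : ℕ} {P : ℂ[X]} {M : ℝ}

theorem norm_eval_reflect_le (hP : P.natDegree ≤ N)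
    (hM : ∀ w ∈ closedBall (0 : ℂ) 1, ‖P.eval w‖ ≤ M) {z : ℂ} (hz : z ∈ closedBall (0 : ℂ) 1) :
    ‖(P.reflect N).eval z‖ ≤ M := by
  refine norm_eval_le_of_forall_mem_sphere _ (fun w hw => ?_) hz
  rw [mem_sphere_zero_iff_norm] at hw
  have hw0 : w ≠ 0 := norm_ne_zero_iff.mp (hw ▸ one_ne_zero)
  calc ‖(P.reflect N).eval w‖ = ‖P.eval w⁻¹‖ := by
        rw [eval_eq_eval_reflect_inv_mul_pow hP (inv_ne_zero hw0), inv_inv, norm_mul, norm_pow,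
          norm_inv, hw, inv_one, one_pow, mul_one]
    _ ≤ M := hM _ (by simp [hw])

theorem norm_eval_le_mul_norm_pow (hP : P.natDegree ≤ N)
    (hM : ∀ w ∈ closedBall (0 : ℂ) 1, ‖P.eval w‖ ≤ M) {z : ℂ} (hz : 1 ≤ ‖z‖) :
    ‖P.eval z‖ ≤ M * ‖z‖ ^ N := by
  have hz0 : z ≠ 0 := norm_pos_iff.mp (one_pos.trans_le hz)
  have hz_inv : z⁻¹ ∈ closedBall (0 : ℂ) 1 := by simpa using inv_le_one_of_one_le₀ hz
  rw [eval_eq_eval_reflect_inv_mul_pow hP hz0, norm_mul, norm_pow]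
  gcongr
  exact norm_eval_reflect_le hP hM hz_inv

theorem norm_coeff_le (hP : P.natDegree ≤ N)
    (hM : ∀ w ∈ closedBall (0 : ℂ) 1, ‖P.eval w‖ ≤ M) : ‖P.coeff N‖ ≤ M := by
  have h := norm_eval_reflect_le hP hM (mem_closedBall_self zero_le_one)
  rwa [← coeff_zero_eq_eval_zero, coeff_reflect, revAt_zero] at h

theorem norm_eval_derivative_le_of_one_le_norm (hP : P.natDegree ≤ N)
    (hM : ∀ w ∈ closedBall (0 : ℂ) 1, ‖P.eval w‖ ≤ M) {z : ℂ} (hz : 1 ≤ ‖z‖) :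
    ‖P.derivative.eval z‖ ≤ N * M * ‖z‖ ^ (N - 1) := by
  by_contra! hlt
  have hz0 : z ≠ 0 := norm_pos_iff.mp (one_pos.trans_le hz)
  have hN : N ≠ 0 := by
    rintro rfl
    rw [derivative_of_natDegree_zero (Nat.le_zero.mp hP)] at hlt
    simp at hlt
  have hden : (N * z ^ (N - 1) : ℂ) ≠ 0 :=
    mul_ne_zero (Nat.cast_ne_zero.mpr hN) (pow_ne_zero _ hz0)
  set a := P.derivative.eval z / (N * z ^ (N - 1))
  have ha : M < ‖a‖ := by
    rw [norm_div, lt_div_iff₀ (norm_pos_iff.mpr hden), norm_mul, norm_pow, Complex.norm_natCast]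
    linarith
  set Q := P - C a * X ^ N
  have hQz : Q.derivative.IsRoot z := by
    simp only [Q, IsRoot, derivative_sub, derivative_C_mul_X_pow, eval_sub, eval_C_mul, eval_X_pow]
    rw [mul_assoc, div_mul_cancel₀ _ hden, sub_self]
  have hroots : ∀ w, Q.IsRoot w → w ∈ ball (0 : ℂ) 1 := by
    intro w hw
    by_contra! hw1
    rw [mem_ball_zero_iff, not_lt] at hw1
    have hPw : P.eval w = a * w ^ N := by simpa [Q, IsRoot, sub_eq_zero] using hw
    have hgrowth := norm_eval_le_mul_norm_pow hP hM hw1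
    rw [hPw, norm_mul, norm_pow] at hgrowth
    have : 0 < ‖w‖ ^ N := by positivity
    nlinarith
  have hdeg : 0 < Q.degree := by
    have hcoeff : Q.coeff N ≠ 0 := by
      rw [coeff_sub, coeff_C_mul_X_pow, if_pos rfl, sub_ne_zero]
      rintro h
      exact (norm_coeff_le hP hM).not_gt (h ▸ ha)
    exact natDegree_pos_iff_degree_pos.mp
      ((Nat.pos_of_ne_zero hN).trans_le (le_natDegree_of_ne_zero hcoeff))
  have hz_ball := mem_of_isRoot_derivative (convex_ball 0 1) hdeg hroots hQz
  rw [mem_ball_zero_iff] at hz_ball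
  linarith

end Polynomial

/-- Bernstein's polynomial inequality: for a complex polynomial of degree at most `N`,
the sup of `|P'|` over the closed unit disk is at most `N` times the sup of `|P|`. -/
theorem bernstein_polynomial_inequality (N : ℕ) (P : Polynomial ℂ)
    (hP : P.natDegree ≤ N) :
    (⨆ z ∈ Metric.closedBall (0 : ℂ) 1, ‖P.derivative.eval z‖) ≤
      N * ⨆ z ∈ Metric.closedBall (0 : ℂ) 1, ‖P.eval z‖ := by
  set M := ⨆ z ∈ closedBall (0 : ℂ) 1, ‖P.eval z‖
  have hbdd : BddAbove (⋃ z, Set.range fun (_ : z ∈ closedBall (0 : ℂ) 1) => ‖P.eval z‖) := by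
    refine ((isCompact_closedBall (0 : ℂ) 1).bddAbove_image
      P.continuous.norm.continuousOn).mono ?_
    rintro _ ⟨_, ⟨z, rfl⟩, ⟨hz, rfl⟩⟩
    exact ⟨z, hz, rfl⟩
  have hM : ∀ w ∈ closedBall (0 : ℂ) 1, ‖P.eval w‖ ≤ M := le_ciSup₂ hbdd
  have hM0 : 0 ≤ M := (norm_nonneg _).trans (hM 0 (mem_closedBall_self zero_le_one))
  have hsphere : ∀ w ∈ sphere (0 : ℂ) 1, ‖P.derivative.eval w‖ ≤ N * M := fun w hw => by
    rw [mem_sphere_zero_iff_norm] at hw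
    simpa [hw] using norm_eval_derivative_le_of_one_le_norm hP hM hw.ge
  exact Real.iSup_le (fun z => Real.iSup_le (fun hz =>
    norm_eval_le_of_forall_mem_sphere _ hsphere hz) (by positivity)) (by positivity)
end

section
/- Suppose the pair (μ, z) is the unique minimizer of ‖μ̃‖_TV + λ‖z̃‖₁ subject to F_n μ̃ + z̃ = y, where y = F_n μ + z. Let μ' be the restriction of μ to a subset T' of its support and z' the restriction of z to a subset Ω' of its support, and set y' = F_n μ' + z'. Then (μ', z') is the unique minimizer of the same problem with data y' and the same λ. -/
/-!
Split `μ = μ' + ρ` and `z = z' + d`, where `ρ` and `d` are the discarded parts, so that the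
objective is additive: `‖μ‖_TV = ‖μ'‖_TV + ‖ρ‖_TV` and `‖z‖₁ = ‖z'‖₁ + ‖d‖₁`. If `(ν, w)` were
a competitor for the data `F_n μ' + z'` with objective at most that of `(μ', z')`, then
`(ν + ρ, w + d)` would be a competitor for the data `F_n μ + z` which, by the triangle
inequality and `λ ≥ 0`, does no worse than `(μ, z)`, contradicting its uniqueness.
-/

open Real Complex

/-- The map sending a finitely-atomic measure `μ = ∑ x_j δ_{f_j}` (represented as a
finitely supported function `ℝ →₀ ℂ`) to its first `n` Fourier coefficients. -/
noncomputable def Fmap (n : ℕ) (μ : ℝ →₀ ℂ) : Fin n → ℂ := fun l =>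
  ∑ f ∈ μ.support, μ f * Complex.exp (Complex.I * (2 * π * ((l : ℕ) + 1) * f))

/-- The total-variation norm of a finitely-atomic measure. -/
noncomputable def tvNorm (μ : ℝ →₀ ℂ) : ℝ := ∑ f ∈ μ.support, ‖μ f‖

/-- `(μ, z)` is the unique minimizer of `‖μ̃‖_TV + λ‖z̃‖₁` subject to
`F_n μ̃ + z̃ = y`, over atomic measures supported in `[0,1]`. -/
def IsUniqueMin (n : ℕ) (lam : ℝ) (y : Fin n → ℂ) (μ : ℝ →₀ ℂ) (z : Fin n → ℂ) : Prop :=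
  (∀ f ∈ μ.support, f ∈ Set.Icc (0 : ℝ) 1) ∧
  (∀ l : Fin n, y l = Fmap n μ l + z l) ∧
  ∀ (μ' : ℝ →₀ ℂ) (z' : Fin n → ℂ),
    (∀ f ∈ μ'.support, f ∈ Set.Icc (0 : ℝ) 1) →
    (∀ l : Fin n, y l = Fmap n μ' l + z' l) →
    (μ', z') ≠ (μ, z) →
    tvNorm μ + lam * ∑ l : Fin n, ‖z l‖ < tvNorm μ' + lam * ∑ l : Fin n, ‖z' l‖

lemma Fmap_apply_eq_finsupp_sum (n : ℕ) (μ : ℝ →₀ ℂ) (l : Fin n) :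
    Fmap n μ l = μ.sum fun f a => a * Complex.exp (Complex.I * (2 * π * ((l : ℕ) + 1) * f)) :=
  rfl

lemma Fmap_add (n : ℕ) (a b : ℝ →₀ ℂ) (l : Fin n) :
    Fmap n (a + b) l = Fmap n a l + Fmap n b l := by
  simp only [Fmap_apply_eq_finsupp_sum]
  exact Finsupp.sum_add_index' (fun _ => zero_mul _) fun _ _ _ => add_mul _ _ _

lemma tvNorm_eq_sum_of_support_subset {μ : ℝ →₀ ℂ} {S : Finset ℝ} (hS : μ.support ⊆ S) :
    tvNorm μ = ∑ f ∈ S, ‖μ f‖ :=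
  Finset.sum_subset hS fun f _ hf => by simp [Finsupp.notMem_support_iff.mp hf]

lemma tvNorm_add_le (a b : ℝ →₀ ℂ) : tvNorm (a + b) ≤ tvNorm a + tvNorm b := by
  rw [tvNorm_eq_sum_of_support_subset Finsupp.support_add,
    tvNorm_eq_sum_of_support_subset (Finset.subset_union_left (s₂ := b.support)),
    tvNorm_eq_sum_of_support_subset (Finset.subset_union_right (s₁ := a.support)),
    ← Finset.sum_add_distrib]
  exact Finset.sum_le_sum fun f _ => norm_add_le (a f) (b f)

lemma tvNorm_filter_add_filter_not (μ : ℝ →₀ ℂ) (p : ℝ → Prop) [DecidablePred p] :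
    tvNorm (μ.filter p) + tvNorm (μ.filter fun f => ¬p f) = tvNorm μ :=
  Finsupp.sum_filter_add_sum_filter_not p μ fun _ a => ‖a‖

lemma sum_norm_indicator_add_indicator_compl {ι E : Type*} [Fintype ι]
    [SeminormedAddCommGroup E] (s : Set ι) (x : ι → E) :
    ∑ i, ‖s.indicator x i‖ + ∑ i, ‖sᶜ.indicator x i‖ = ∑ i, ‖x i‖ := by
  rw [← Finset.sum_add_distrib]
  refine Finset.sum_congr rfl fun i _ => ?_
  by_cases hi : i ∈ s <;> simp [hi]

theorem IsUniqueMin.of_add {n : ℕ} {lam : ℝ} (hlam : 0 ≤ lam) {y : Fin n → ℂ}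
    {μ μ' ρ : ℝ →₀ ℂ} {z z' d : Fin n → ℂ} (h : IsUniqueMin n lam y μ z)
    (hμ' : ∀ f ∈ μ'.support, f ∈ Set.Icc (0 : ℝ) 1) (hρ : ∀ f ∈ ρ.support, f ∈ Set.Icc (0 : ℝ) 1)
    (hμ : μ' + ρ = μ) (hz : z' + d = z) (hμnorm : tvNorm μ' + tvNorm ρ = tvNorm μ)
    (hznorm : ∑ l, ‖z' l‖ + ∑ l, ‖d l‖ = ∑ l, ‖z l‖) :
    IsUniqueMin n lam (fun l => Fmap n μ' l + z' l) μ' z' := by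
  obtain ⟨-, hy, hmin⟩ := h
  refine ⟨hμ', fun l => rfl, fun ν w hν hνw hne => ?_⟩
  have hsupp : ∀ f ∈ (ν + ρ).support, f ∈ Set.Icc (0 : ℝ) 1 := fun f hf =>
    (Finset.mem_union.mp (Finsupp.support_add hf)).elim (hν f) (hρ f)
  have hfeas : ∀ l, y l = Fmap n (ν + ρ) l + (w + d) l := fun l => by
    rw [hy l, ← hμ, ← hz, Fmap_add, Fmap_add, Pi.add_apply, Pi.add_apply]
    linear_combination hνw l
  have hne' : (ν + ρ, w + d) ≠ (μ, z) := fun heq => by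
    rw [← hμ, ← hz, Prod.mk.injEq, add_left_inj, add_left_inj] at heq
    exact hne (Prod.ext heq.1 heq.2)
  have hlt := hmin _ _ hsupp hfeas hne'
  have hTV := tvNorm_add_le ν ρ
  have hℓ1 : ∑ l, ‖(w + d) l‖ ≤ ∑ l, ‖w l‖ + ∑ l, ‖d l‖ := by
    rw [← Finset.sum_add_distrib]
    exact Finset.sum_le_sum fun l _ => norm_add_le _ _
  rw [← hμnorm, ← hznorm] at hlt
  linarith [mul_le_mul_of_nonneg_left hℓ1 hlam]

theorem trimmed_solution_general (n : ℕ) (lam : ℝ) (hlam : 0 < lam)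
    (μ : ℝ →₀ ℂ) (z : Fin n → ℂ)
    (h : IsUniqueMin n lam (fun l => Fmap n μ l + z l) μ z)
    (T' : Finset ℝ)
    (Ω' : Finset (Fin n))
    (μ' : ℝ →₀ ℂ) (hμ' : ∀ f : ℝ, μ' f = if f ∈ T' then μ f else 0)
    (z' : Fin n → ℂ) (hz' : ∀ l : Fin n, z' l = if l ∈ Ω' then z l else 0) :
    IsUniqueMin n lam (fun l => Fmap n μ' l + z' l) μ' z' := by
  obtain rfl : μ' = μ.filter (· ∈ T') := Finsupp.ext hμ'
  obtain rfl : z' = (Ω' : Set (Fin n)).indicator z :=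
    funext fun l => by simp [hz', Set.indicator_apply]
  have hsupp : ∀ p : ℝ → Prop, ∀ [DecidablePred p],
      ∀ f ∈ (μ.filter p).support, f ∈ Set.Icc (0 : ℝ) 1 := fun p _ f hf =>
    h.1 f (Finset.mem_of_mem_filter f hf)
  exact h.of_add hlam.le (hsupp _) (hsupp _) (Finsupp.filter_add_filter_not μ _)
    (Set.indicator_self_add_compl _ z) (tvNorm_filter_add_filter_not μ _)
    (sum_norm_indicator_add_indicator_compl _ z)

/-- If `(μ, z)` is the unique minimizer for the data `y = F_n μ + z`, then any trimmed
pair `(μ', z')` (obtained by restricting `μ` to a subset `T'` of its support and `z` to a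
subset `Ω'` of its support) is the unique minimizer for the data `y' = F_n μ' + z'`,
with the same regularization parameter `λ`. -/
theorem trimmed_solution (n : ℕ) (lam : ℝ) (hlam : 0 < lam)
    (μ : ℝ →₀ ℂ) (z : Fin n → ℂ)
    (h : IsUniqueMin n lam (fun l => Fmap n μ l + z l) μ z)
    (T' : Finset ℝ) (hT' : T' ⊆ μ.support)
    (Ω' : Finset (Fin n)) (hΩ' : ∀ l ∈ Ω', z l ≠ 0)
    (μ' : ℝ →₀ ℂ) (hμ' : ∀ f : ℝ, μ' f = if f ∈ T' then μ f else 0)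
    (z' : Fin n → ℂ) (hz' : ∀ l : Fin n, z' l = if l ∈ Ω' then z l else 0) :
    IsUniqueMin n lam (fun l => Fmap n μ' l + z' l) μ' z' :=
  trimmed_solution_general n lam hlam μ z h T' Ω' μ' hμ' z' hz'
end

section
/- Let T ⊂ [0,1] be a finite set with wrap-around minimum separation Δ(T) ≥ Δ_min = 1.26/m for m ≥ 10³. Fix f_i ∈ T and a constant C > 0, and suppose a kernel derivative bound |D^{(ℓ)}(f)| ≤ (2πm)^ℓ for all f and |D^{(ℓ)}(f)| ≤ 1.1·2^{ℓ-2}π^ℓ m^{ℓ-1}/|f| for |f| ≥ 80/m (wrap-around distance). Then with κ ≤ 0.468/m, ∑_{j=1}^k κ^ℓ |D^{(ℓ)}(f_i − f_j)| ≤ 130 π^ℓ log k for each ℓ ∈ {0,1,2}, provided k ≥ 3. -/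
/-!
Wrap each difference `f i - f j` into `[-1/2, 1/2]` by subtracting the nearest integer: by
periodicity the kernel values do not change, and the wrapped points are `δ = 1.26/m`-separated on
the line. Labelling a point `x` by `⌊x / δ⌋` is injective, and the label's absolute value is within
one of `|x| / δ`. So at most `129` points lie within `80/m` of the origin, each contributing at
most `π^ℓ` by the uniform bound; every other point contributes at most `0.275 π^ℓ / (m |x|)` by the
decay bound, and `∑ 1/|x| ≤ (2/δ) ∑ 1/|label|`, a harmonic sum over distinct integers, which is at
most `4 (2 + log k) / δ`.
-/

open Real Finset

lemma Function.Periodic.iteratedDeriv {𝕜 F : Type*} [NontriviallyNormedField 𝕜]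
    [NormedAddCommGroup F] [NormedSpace 𝕜 F] {D : 𝕜 → F} {c : 𝕜}
    (h : Function.Periodic D c) (n : ℕ) : Function.Periodic (iteratedDeriv n D) c := fun x => by
  simpa [funext h] using (congrFun (iteratedDeriv_comp_add_const n D c) x).symm

lemma sum_inv_natCast_le_two_add_log (R : Finset ℕ) {k : ℕ} (hR : #R ≤ k) :
    ∑ r ∈ R, (r : ℝ)⁻¹ ≤ 2 + log k := by
  -- `(0 : ℝ)⁻¹ = 0`, so `0 ∈ R` does no harm.
  obtain rfl | hk := k.eq_zero_or_pos
  · simp [card_eq_zero.1 (Nat.le_zero.1 hR)]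
  rw [← sum_filter_add_sum_filter_not R (· ≤ k)]
  have hsmall : ∑ r ∈ R with r ≤ k, (r : ℝ)⁻¹ ≤ 1 + log k := calc
    _ ≤ ∑ r ∈ range (k + 1), (r : ℝ)⁻¹ :=
        sum_le_sum_of_subset_of_nonneg (fun r hr => by
          simp only [mem_filter] at hr; exact mem_range_succ_iff.2 hr.2) fun _ _ _ => by positivity
    _ = harmonic k := by simp [sum_range_succ', harmonic]
    _ ≤ 1 + log k := harmonic_le_one_add_log k
  have hlarge : ∑ r ∈ R with ¬r ≤ k, (r : ℝ)⁻¹ ≤ 1 := calc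
    _ ≤ #R • (k : ℝ)⁻¹ := by
        refine sum_le_card_nsmul _ _ _ (fun r hr => ?_) |>.trans
          (nsmul_le_nsmul_left (by positivity) (card_filter_le _ _))
        simp only [mem_filter, not_le] at hr
        exact inv_anti₀ (by positivity) (by exact_mod_cast hr.2.le)
    _ ≤ k * (k : ℝ)⁻¹ := by rw [nsmul_eq_mul]; gcongr
    _ ≤ 1 := mul_inv_le_one
  linarith

lemma sum_inv_abs_int_le (S : Finset ℤ) {k : ℕ} (hS : #S ≤ k) :
    ∑ n ∈ S, |(n : ℝ)|⁻¹ ≤ 2 * (2 + log k) := by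
  have hfiber : ∀ r : ℕ, #{n ∈ S | n.natAbs = r} ≤ 2 := fun r =>
    (card_le_card fun n hn => by
      simp only [mem_filter] at hn
      simpa [← hn.2] using Int.natAbs_eq n).trans (card_le_two (a := (r : ℤ)) (b := -r))
  calc ∑ n ∈ S, |(n : ℝ)|⁻¹ = ∑ n ∈ S, ((n.natAbs : ℕ) : ℝ)⁻¹ := by simp [Nat.cast_natAbs]
    _ = ∑ r ∈ S.image Int.natAbs, #{n ∈ S | n.natAbs = r} • (r : ℝ)⁻¹ :=
        sum_comp (fun r : ℕ => (r : ℝ)⁻¹) Int.natAbs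
    _ ≤ ∑ r ∈ S.image Int.natAbs, 2 • (r : ℝ)⁻¹ :=
        sum_le_sum fun r _ => nsmul_le_nsmul_left (by positivity) (hfiber r)
    _ = 2 * ∑ r ∈ S.image Int.natAbs, (r : ℝ)⁻¹ := by simp [mul_sum]
    _ ≤ 2 * (2 + log k) := by
        gcongr; exact sum_inv_natCast_le_two_add_log _ (card_image_le.trans hS)

lemma abs_abs_sub_abs_floor_lt_one (y : ℝ) : |(|y| - |(⌊y⌋ : ℝ)|)| < 1 :=
  (abs_abs_sub_abs_le_abs_sub _ _).trans_lt <| by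
    rw [Int.self_sub_floor, abs_of_nonneg (Int.fract_nonneg y)]; exact Int.fract_lt_one y

section Separated

variable {ι : Type*} {s : ι → ℝ} {δ : ℝ}

lemma injective_floor_div_of_separated (hδ : 0 < δ)
    (hsep : Pairwise fun i j => δ ≤ |s i - s j|) : Function.Injective fun j => ⌊s j / δ⌋ := by
  intro i j hij
  by_contra hne
  have h := Int.abs_sub_lt_one_of_floor_eq_floor hij
  rw [← sub_div, abs_div, abs_of_pos hδ, div_lt_one hδ] at h
  exact (hsep hne).not_gt h

variable [Fintype ι]

lemma card_abs_lt_le_of_separated (hδ : 0 < δ) (hsep : Pairwise fun i j => δ ≤ |s i - s j|)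
    {R : ℝ} {N : ℕ} (hRN : R ≤ N * δ) : #{j | |s j| < R} ≤ 2 * N + 1 := by
  calc #{j | |s j| < R} ≤ #(Icc (-N : ℤ) N) :=
        card_le_card_of_injOn (fun j => ⌊s j / δ⌋) ?_
          (injective_floor_div_of_separated hδ hsep).injOn
    _ = 2 * N + 1 := by simp; omega
  intro j hj
  have hlabel := abs_abs_sub_abs_floor_lt_one (s j / δ)
  have hs : |s j / δ| < N := by
    rw [abs_div, abs_of_pos hδ, div_lt_iff₀ hδ]
    exact (mem_filter.1 hj).2.trans_le hRN
  have hn : |(⌊s j / δ⌋ : ℝ)| < N + 1 := by linarith [(abs_lt.1 hlabel).1]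
  rw [mem_coe, mem_Icc, ← abs_le, ← Int.lt_add_one_iff]
  exact_mod_cast hn

lemma sum_inv_abs_le_of_separated (hδ : 0 < δ) (hsep : Pairwise fun i j => δ ≤ |s i - s j|)
    {R : ℝ} (hδR : δ ≤ R) :
    ∑ j with R ≤ |s j|, |s j|⁻¹ ≤ 4 * (2 + log (Fintype.card ι)) / δ := by
  set n := fun j => ⌊s j / δ⌋
  have hterm : ∀ j, δ ≤ |s j| → |s j|⁻¹ ≤ 2 / δ * |(n j : ℝ)|⁻¹ := by
    intro j hj
    have hlabel := abs_abs_sub_abs_floor_lt_one (s j / δ)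
    rw [abs_div, abs_of_pos hδ, abs_lt] at hlabel
    have hone : 1 ≤ |s j| / δ := (one_le_div hδ).2 hj
    have hpos : 0 < |(n j : ℝ)| := by linarith
    calc |s j|⁻¹ ≤ (δ * |(n j : ℝ)| / 2)⁻¹ := by
          refine inv_anti₀ (by positivity) ?_
          rw [div_le_iff₀ two_pos, ← le_div_iff₀' hδ, mul_div_right_comm]
          linarith
      _ = 2 / δ * |(n j : ℝ)|⁻¹ := by field_simp
  calc ∑ j with R ≤ |s j|, |s j|⁻¹ ≤ ∑ j with R ≤ |s j|, 2 / δ * |(n j : ℝ)|⁻¹ :=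
        sum_le_sum fun j hj => hterm j (hδR.trans (mem_filter.1 hj).2)
    _ = 2 / δ * ∑ l ∈ image n {j | R ≤ |s j|}, |(l : ℝ)|⁻¹ := by
        rw [sum_image (injective_floor_div_of_separated hδ hsep).injOn, mul_sum]
    _ ≤ 2 / δ * (2 * (2 + log (Fintype.card ι))) := by
        gcongr
        exact sum_inv_abs_int_le _ (card_image_le.trans (card_le_univ _))
    _ = 4 * (2 + log (Fintype.card ι)) / δ := by ring

theorem sum_le_of_separated (hδ : 0 < δ) (hsep : Pairwise fun i j => δ ≤ |s i - s j|)
    {g : ι → ℝ} {A B R : ℝ} {N : ℕ} (hA : 0 ≤ A) (hB : 0 ≤ B) (hδR : δ ≤ R)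
    (hRN : R ≤ N * δ) (hunif : ∀ j, g j ≤ A) (hfar : ∀ j, R ≤ |s j| → g j ≤ B / |s j|) :
    ∑ j, g j ≤ (2 * N + 1) * A + B * (4 * (2 + log (Fintype.card ι)) / δ) := by
  rw [← sum_filter_add_sum_filter_not univ (fun j => |s j| < R)]
  gcongr ?_ + ?_
  · calc ∑ j with |s j| < R, g j ≤ #{j | |s j| < R} • A :=
          sum_le_card_nsmul _ _ _ fun j _ => hunif j
      _ ≤ (2 * N + 1) • A := nsmul_le_nsmul_left hA (card_abs_lt_le_of_separated hδ hsep hRN)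
      _ = (2 * N + 1) * A := by rw [nsmul_eq_mul]; push_cast; ring
  · simp only [not_lt]
    calc ∑ j with R ≤ |s j|, g j ≤ ∑ j with R ≤ |s j|, B * |s j|⁻¹ :=
          sum_le_sum fun j hj => (hfar j (mem_filter.1 hj).2).trans_eq (div_eq_mul_inv _ _)
      _ ≤ B * (4 * (2 + log (Fintype.card ι)) / δ) := by
          rw [← mul_sum]
          exact mul_le_mul_of_nonneg_left (sum_inv_abs_le_of_separated hδ hsep hδR) hB

end Separated

section KernelBounds

variable {ℓ : ℕ} {κ M v : ℝ}

lemma pow_mul_le_pi_pow (hκ : 0 ≤ κ) (hM : 0 ≤ M) (hκM : κ * M ≤ 1 / 2)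
    (hv : v ≤ (2 * π * M) ^ ℓ) : κ ^ ℓ * v ≤ π ^ ℓ := calc
  κ ^ ℓ * v ≤ κ ^ ℓ * (2 * π * M) ^ ℓ := by gcongr
  _ = (2 * (κ * M) * π) ^ ℓ := by rw [← mul_pow]; ring_nf
  _ ≤ π ^ ℓ := by
      have := mul_nonneg hκ hM
      gcongr
      nlinarith [pi_pos]

lemma pow_mul_le_of_decay {x : ℝ} (hκ : 0 ≤ κ) (hM : 0 < M) (hκM : κ * M ≤ 1 / 2) (hx : 0 ≤ x)
    (hv : v ≤ 1.1 * (2 : ℝ) ^ ((ℓ : ℤ) - 2) * π ^ ℓ * M ^ ((ℓ : ℤ) - 1) / x) :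
    κ ^ ℓ * v ≤ 0.275 * π ^ ℓ / (M * x) := by
  have hform : 1.1 * (2 : ℝ) ^ ((ℓ : ℤ) - 2) * π ^ ℓ * M ^ ((ℓ : ℤ) - 1) / x
      = (2 * M) ^ ℓ * (0.275 * π ^ ℓ / (M * x)) := by
    rw [zpow_sub₀ two_ne_zero, zpow_sub₀ hM.ne', zpow_natCast, zpow_natCast]
    field_simp
    ring
  calc κ ^ ℓ * v ≤ κ ^ ℓ * ((2 * M) ^ ℓ * (0.275 * π ^ ℓ / (M * x))) := by
        rw [← hform]; gcongr
    _ = (2 * (κ * M)) ^ ℓ * (0.275 * π ^ ℓ / (M * x)) := by ring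
    _ ≤ 0.275 * π ^ ℓ / (M * x) := by
        refine mul_le_of_le_one_left (by positivity) (pow_le_one₀ ?_ (by linarith))
        have := mul_nonneg hκ hM.le; positivity

end KernelBounds

theorem dirichlet_row_sum_bound_general (m k : ℕ) (hk : 3 ≤ k)
    (f : Fin k → ℝ)
    (hsep : ∀ i j : Fin k, i ≠ j → ∀ t : ℤ, 1.26 / m ≤ |f i - f j + t|)
    (D : ℝ → ℂ) (hper : Function.Periodic D 1)
    (hbound : ∀ ℓ : ℕ, ℓ ≤ 2 → ∀ x : ℝ, ‖iteratedDeriv ℓ D x‖ ≤ (2 * π * m) ^ ℓ)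
    (hdecay : ∀ ℓ : ℕ, ℓ ≤ 2 → ∀ x : ℝ, 80 / m ≤ |x| → |x| ≤ 1 / 2 →
      ‖iteratedDeriv ℓ D x‖ ≤ 1.1 * (2 : ℝ) ^ ((ℓ : ℤ) - 2) * π ^ ℓ *
        (m : ℝ) ^ ((ℓ : ℤ) - 1) / |x|)
    (κ : ℝ) (hκpos : 0 < κ) (hκ : κ ≤ 0.468 / m) (i : Fin k) :
    ∀ ℓ : ℕ, ℓ ≤ 2 →
      ∑ j : Fin k, κ ^ ℓ * ‖iteratedDeriv ℓ D (f i - f j)‖ ≤ 130 * π ^ ℓ * Real.log k := by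
  intro ℓ hℓ
  -- `m = 0` would force `κ ≤ 0.468 / 0 = 0`.
  have hm : (0 : ℝ) < m := by
    by_contra! h
    linarith [div_nonpos_of_nonneg_of_nonpos (by norm_num : (0 : ℝ) ≤ 0.468) h]
  have hκm : κ * m ≤ 1 / 2 := by rw [le_div_iff₀ hm] at hκ; linarith
  set s : Fin k → ℝ := fun j => f i - f j - round (f i - f j)
  have hwrap : ∀ j, iteratedDeriv ℓ D (f i - f j) = iteratedDeriv ℓ D (s j) := fun j => by
    simpa using ((hper.iteratedDeriv ℓ).sub_int_mul_eq (round (f i - f j))).symm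
  have hsep_s : Pairwise fun j j' => 1.26 / m ≤ |s j - s j'| := fun j j' hne => by
    convert hsep j' j hne.symm (round (f i - f j') - round (f i - f j)) using 2
    push_cast; ring
  have hrow := sum_le_of_separated (by positivity) hsep_s (N := 64) (R := 80 / m)
    (g := fun j => κ ^ ℓ * ‖iteratedDeriv ℓ D (s j)‖) (A := π ^ ℓ) (B := 0.275 * π ^ ℓ / m)
    (by positivity) (by positivity) (by gcongr; norm_num) (by rw [mul_div_assoc']; gcongr; norm_num)
    (fun j => pow_mul_le_pi_pow hκpos.le hm.le hκm (hbound ℓ hℓ _))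
    (fun j hj => by
      rw [div_div]
      exact pow_mul_le_of_decay hκpos.le hm hκm (abs_nonneg _)
        (hdecay ℓ hℓ _ hj (abs_sub_round _)))
  have hlog : 1.0986 ≤ log k := calc
    (1.0986 : ℝ) ≤ log 3 := by linarith [log_three_gt_d9]
    _ ≤ log k := log_le_log (by norm_num) (by exact_mod_cast hk)
  simp only [hwrap]
  calc _ ≤ _ := hrow
    _ = π ^ ℓ * (129 + 1.1 / 1.26 * (2 + log k)) := by
        rw [Fintype.card_fin]; field_simp; ring
    _ ≤ 130 * π ^ ℓ * log k := by nlinarith [pow_pos pi_pos ℓ]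

/-- Row-sum bound for the Dirichlet kernel and its derivatives: under a wrap-around minimum
separation `1.26/m` of the frequencies, the uniform bound `|D^{(ℓ)}| ≤ (2πm)^ℓ` and the
decay bound `|D^{(ℓ)}(f)| ≤ 1.1·2^{ℓ-2}π^ℓ m^{ℓ-1}/|f|` for `80/m ≤ |f| ≤ 1/2`, one has
`∑_j κ^ℓ |D^{(ℓ)}(f_i − f_j)| ≤ 130 π^ℓ log k` for each `ℓ ∈ {0,1,2}`. -/
theorem dirichlet_row_sum_bound (m k : ℕ) (hm : 1000 ≤ m) (hk : 3 ≤ k)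
    (f : Fin k → ℝ) (hf : ∀ j, f j ∈ Set.Icc (0 : ℝ) 1)
    (hsep : ∀ i j : Fin k, i ≠ j → ∀ t : ℤ, 1.26 / m ≤ |f i - f j + t|)
    (D : ℝ → ℂ) (hper : Function.Periodic D 1)
    (hbound : ∀ ℓ : ℕ, ℓ ≤ 2 → ∀ x : ℝ, ‖iteratedDeriv ℓ D x‖ ≤ (2 * π * m) ^ ℓ)
    (hdecay : ∀ ℓ : ℕ, ℓ ≤ 2 → ∀ x : ℝ, 80 / m ≤ |x| → |x| ≤ 1 / 2 →
      ‖iteratedDeriv ℓ D x‖ ≤ 1.1 * (2 : ℝ) ^ ((ℓ : ℤ) - 2) * π ^ ℓ *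
        (m : ℝ) ^ ((ℓ : ℤ) - 1) / |x|)
    (κ : ℝ) (hκpos : 0 < κ) (hκ : κ ≤ 0.468 / m) (i : Fin k) :
    ∀ ℓ : ℕ, ℓ ≤ 2 →
      ∑ j : Fin k, κ ^ ℓ * ‖iteratedDeriv ℓ D (f i - f j)‖ ≤ 130 * π ^ ℓ * Real.log k :=
  dirichlet_row_sum_bound_general m k hk f hsep D hper hbound hdecay κ hκpos hκ i
end
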